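/- Restriction property: Let 𝒳' be a random subset with 𝒳' ⊆ 𝒳 and P(𝒳' = ∅) < 1, and define P'_E by P'_E(F ∩ {S=x}) = (1/E[|𝒳'|]) P(F ∩ {x ∈ 𝒳'}). Then P_E(S ∈ 𝒳') = E[|𝒳'|]/E[|𝒳|] > 0, and for every event G in ℱ, P_E(G | S ∈ 𝒳') = P'_E(G). -/

import Mathlib

/-! On the event `{S ∈ 𝒳'}` the Thirder weight built from `𝒳` is the constant multiple
`E[|𝒳'|] / E[|𝒳|]` of the one built from `𝒳'`, and the latter is carried by `{S ∈ 𝒳'}` and has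
total mass one. Hence `P_E(· ∩ {S ∈ 𝒳'}) = (E[|𝒳'|] / E[|𝒳|]) P'_E`, and conditioning cancels the
constant. Positivity of `E[|𝒳|]` follows from that of `E[|𝒳'|] ≥ P(𝒳' ≠ ∅) > 0`. -/

open scoped Classical
open Finset

noncomputable def pr {α : Type*} [Fintype α] (μ : α → ℝ) (A : Set α) : ℝ :=
  ∑ a : α, if a ∈ A then μ a else 0

noncomputable def cpr {α : Type*} [Fintype α] (μ : α → ℝ) (A B : Set α) : ℝ :=
  pr μ (A ∩ B) / pr μ B

noncomputable def ex {α : Type*} [Fintype α] (μ : α → ℝ) (f : α → ℝ) : ℝ :=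
  ∑ a : α, μ a * f a

def IsProb {α : Type*} [Fintype α] (μ : α → ℝ) : Prop :=
  (∀ a, 0 ≤ μ a) ∧ ∑ a : α, μ a = 1

section Weights

variable {α : Type*} [Fintype α] {μ ν : α → ℝ}

theorem pr_add_pr_compl (μ : α → ℝ) (A : Set α) : pr μ A + pr μ Aᶜ = ∑ a, μ a := by
  rw [pr, pr, ← sum_add_distrib]
  refine sum_congr rfl fun a _ => ?_
  by_cases ha : a ∈ A <;> simp [ha]

theorem pr_le_ex {A : Set α} {f : α → ℝ} (hμ : ∀ a, 0 ≤ μ a) (hf : ∀ a, 0 ≤ f a)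
    (hA : ∀ a ∈ A, 1 ≤ f a) : pr μ A ≤ ex μ f := by
  refine sum_le_sum fun a _ => ?_
  split_ifs with ha
  · exact le_mul_of_one_le_right (hμ a) (hA a ha)
  · exact mul_nonneg (hμ a) (hf a)

theorem ex_mono {f g : α → ℝ} (hμ : ∀ a, 0 ≤ μ a) (hfg : ∀ a, f a ≤ g a) :
    ex μ f ≤ ex μ g :=
  sum_le_sum fun a _ => mul_le_mul_of_nonneg_left (hfg a) (hμ a)

theorem pr_inter_eq_mul_pr {A B : Set α} (r : ℝ) (hB : ∀ a ∈ B, μ a = r * ν a)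
    (hν : ∀ a ∉ B, ν a = 0) : pr μ (A ∩ B) = r * pr ν A := by
  rw [pr, pr, mul_sum]
  refine sum_congr rfl fun a _ => ?_
  by_cases ha : a ∈ B
  · simp [ha, hB a ha]
  · simp [ha, hν a ha]

end Weights

section Thirder

variable {Ω₀ K : Type*} [Fintype Ω₀]

theorem ex_card_pos {P0 : Ω₀ → ℝ} {𝒳 : Ω₀ → Finset K} (hP0 : IsProb P0)
    (hne : pr P0 {o | 𝒳 o = ∅} < 1) : 0 < ex P0 fun o => ((𝒳 o).card : ℝ) := by
  have hcompl := pr_add_pr_compl P0 {o | 𝒳 o = ∅}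
  rw [hP0.2] at hcompl
  refine lt_of_lt_of_le (by linarith) (pr_le_ex hP0.1 (fun _ => by positivity) fun o ho => ?_)
  exact_mod_cast card_pos.mpr (nonempty_iff_ne_empty.mpr ho)

theorem ex_card_mono {P0 : Ω₀ → ℝ} {𝒳 𝒳' : Ω₀ → Finset K} (hP0 : ∀ o, 0 ≤ P0 o)
    (hsub : ∀ o, 𝒳' o ⊆ 𝒳 o) :
    (ex P0 fun o => ((𝒳' o).card : ℝ)) ≤ ex P0 fun o => ((𝒳 o).card : ℝ) :=
  ex_mono hP0 fun o => by exact_mod_cast card_le_card (hsub o)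

variable [DecidableEq K]

noncomputable def thirder (P0 : Ω₀ → ℝ) (𝒳 : Ω₀ → Finset K) (ω : Ω₀ × Option K) : ℝ :=
  ω.2.elim 0 fun x =>
    (ex P0 fun o => ((𝒳 o).card : ℝ))⁻¹ * P0 ω.1 * if x ∈ 𝒳 ω.1 then 1 else 0

def locatedIn (𝒳 : Ω₀ → Finset K) : Set (Ω₀ × Option K) :=
  {ω | ∃ x : K, ω.2 = some x ∧ x ∈ 𝒳 ω.1}

theorem pr_thirder_univ [Fintype K] {P0 : Ω₀ → ℝ} {𝒳 : Ω₀ → Finset K}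
    (hE : (ex P0 fun o => ((𝒳 o).card : ℝ)) ≠ 0) : pr (thirder P0 𝒳) Set.univ = 1 := by
  have hsum : ∀ o, ∑ x : K, (if x ∈ 𝒳 o then (1 : ℝ) else 0) = (𝒳 o).card := by
    intro o
    rw [sum_boole, filter_mem_eq_inter, univ_inter]
  simp only [pr, Set.mem_univ, if_true, Fintype.sum_prod_type, Fintype.sum_option, thirder,
    Option.elim_none, Option.elim_some, zero_add, ← mul_sum, hsum, mul_assoc]
  exact inv_mul_cancel₀ hE

theorem thirder_eq_mul_of_mem_locatedIn {P0 : Ω₀ → ℝ} {𝒳 𝒳' : Ω₀ → Finset K}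
    (hsub : ∀ o, 𝒳' o ⊆ 𝒳 o) (hE' : (ex P0 fun o => ((𝒳' o).card : ℝ)) ≠ 0) :
    ∀ ω ∈ locatedIn 𝒳', thirder P0 𝒳 ω =
      (ex P0 fun o => ((𝒳 o).card : ℝ))⁻¹ * (ex P0 fun o => ((𝒳' o).card : ℝ)) *
        thirder P0 𝒳' ω := by
  rintro ⟨o, _⟩ ⟨x, rfl, hx⟩
  simp only [thirder, Option.elim_some, hx, hsub o hx, if_true]
  field_simp

theorem thirder_eq_zero_of_not_mem_locatedIn {P0 : Ω₀ → ℝ} {𝒳 : Ω₀ → Finset K} :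
    ∀ ω ∉ locatedIn 𝒳, thirder P0 𝒳 ω = 0 := by
  rintro ⟨o, _ | x⟩ hω
  · rfl
  · have hx : x ∉ 𝒳 o := fun hx => hω ⟨x, rfl, hx⟩
    simp [thirder, hx]

end Thirder

theorem stmt4_general {Ω₀ K : Type*} [Fintype Ω₀] [Fintype K] [DecidableEq K]
    (P0 : Ω₀ → ℝ) (𝒳 𝒳' : Ω₀ → Finset K)
    (hP0 : IsProb P0)
    (hsub : ∀ o : Ω₀, 𝒳' o ⊆ 𝒳 o)
    (hne' : pr P0 {o | 𝒳' o = ∅} < 1)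
    (PE : Ω₀ × Option K → ℝ)
    (hPE1 : ∀ (o : Ω₀) (x : K),
      PE (o, some x) = (ex P0 (fun o' => ((𝒳 o').card : ℝ)))⁻¹ * P0 o *
        (if x ∈ 𝒳 o then 1 else 0))
    (hPE2 : ∀ o : Ω₀, PE (o, none) = 0)
    (PE' : Ω₀ × Option K → ℝ)
    (hPE'1 : ∀ (o : Ω₀) (x : K),
      PE' (o, some x) = (ex P0 (fun o' => ((𝒳' o').card : ℝ)))⁻¹ * P0 o *
        (if x ∈ 𝒳' o then 1 else 0))
    (hPE'2 : ∀ o : Ω₀, PE' (o, none) = 0) :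
    0 < pr PE {ω | ∃ x : K, ω.2 = some x ∧ x ∈ 𝒳' ω.1} ∧
    pr PE {ω | ∃ x : K, ω.2 = some x ∧ x ∈ 𝒳' ω.1}
      = ex P0 (fun o => ((𝒳' o).card : ℝ)) / ex P0 (fun o => ((𝒳 o).card : ℝ)) ∧
    (∀ G : Set (Ω₀ × Option K),
      cpr PE G {ω | ∃ x : K, ω.2 = some x ∧ x ∈ 𝒳' ω.1} = pr PE' G) := by
  obtain rfl : PE = thirder P0 𝒳 := funext fun
    | (o, none) => hPE2 o
    | (o, some x) => hPE1 o x
  obtain rfl : PE' = thirder P0 𝒳' := funext fun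
    | (o, none) => hPE'2 o
    | (o, some x) => hPE'1 o x
  set E := ex P0 fun o => ((𝒳 o).card : ℝ)
  set E' := ex P0 fun o => ((𝒳' o).card : ℝ)
  have hE' : 0 < E' := ex_card_pos hP0 hne'
  have hE : 0 < E := hE'.trans_le (ex_card_mono hP0.1 hsub)
  have hcond : ∀ G, pr (thirder P0 𝒳) (G ∩ locatedIn 𝒳') = E⁻¹ * E' * pr (thirder P0 𝒳') G :=
    fun G => pr_inter_eq_mul_pr _ (thirder_eq_mul_of_mem_locatedIn hsub hE'.ne')
      thirder_eq_zero_of_not_mem_locatedIn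
  have hmass : pr (thirder P0 𝒳) (locatedIn 𝒳') = E⁻¹ * E' := by
    simpa [pr_thirder_univ hE'.ne'] using hcond Set.univ
  refine ⟨hmass ▸ by positivity, hmass.trans (div_eq_inv_mul _ _).symm, fun G => ?_⟩
  show pr _ (G ∩ locatedIn 𝒳') / pr _ (locatedIn 𝒳') = _
  rw [hcond G, hmass, mul_div_cancel_left₀ _ (by positivity)]

/-- Restriction property of the Thirder measure: if `𝒳' ⊆ 𝒳` with
`P(𝒳' = ∅) < 1`, then `P_E(S ∈ 𝒳') = E[|𝒳'|]/E[|𝒳|] > 0` and, for every event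
`G`, `P_E(G | S ∈ 𝒳') = P'_E(G)`, where `P'_E` is the Thirder measure built
from `𝒳'`. -/
theorem stmt4 {Ω₀ K : Type*} [Fintype Ω₀] [Fintype K] [DecidableEq K]
    (P0 : Ω₀ → ℝ) (𝒳 𝒳' : Ω₀ → Finset K)
    (hP0 : IsProb P0)
    (hne : pr P0 {o | 𝒳 o = ∅} < 1)
    (hsub : ∀ o : Ω₀, 𝒳' o ⊆ 𝒳 o)
    (hne' : pr P0 {o | 𝒳' o = ∅} < 1)
    (PE : Ω₀ × Option K → ℝ)
    (hPE1 : ∀ (o : Ω₀) (x : K),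
      PE (o, some x) = (ex P0 (fun o' => ((𝒳 o').card : ℝ)))⁻¹ * P0 o *
        (if x ∈ 𝒳 o then 1 else 0))
    (hPE2 : ∀ o : Ω₀, PE (o, none) = 0)
    (PE' : Ω₀ × Option K → ℝ)
    (hPE'1 : ∀ (o : Ω₀) (x : K),
      PE' (o, some x) = (ex P0 (fun o' => ((𝒳' o').card : ℝ)))⁻¹ * P0 o *
        (if x ∈ 𝒳' o then 1 else 0))
    (hPE'2 : ∀ o : Ω₀, PE' (o, none) = 0) :
    0 < pr PE {ω | ∃ x : K, ω.2 = some x ∧ x ∈ 𝒳' ω.1} ∧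
    pr PE {ω | ∃ x : K, ω.2 = some x ∧ x ∈ 𝒳' ω.1}
      = ex P0 (fun o => ((𝒳' o).card : ℝ)) / ex P0 (fun o => ((𝒳 o).card : ℝ)) ∧
    (∀ G : Set (Ω₀ × Option K),
      cpr PE G {ω | ∃ x : K, ω.2 = some x ∧ x ∈ 𝒳' ω.1} = pr PE' G) :=
  stmt4_general P0 𝒳 𝒳' hP0 hsub hne' PE hPE1 hPE2 PE' hPE'1 hPE'2
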